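/- arXiv:2005.09352 — 8 statements merged into one kernel-verified Lean document; each statement's English description precedes it below -/
import Mathlib

section
/- For integers q ≥ 2, n ≥ 5 with n ≥ q, the sum over k from 1 to n of C(n,k) * (q-1)^k / k is at most q^(n+1) / ((q-1)(n-2)). -/
/-!
Pascal's rule `C(n+1, k+1) = C(n, k) + C(n, k+1)` turns `∑ₖ C(n,k) xᵏ / k` into
`∑_{m=1}^n ((1+x)ᵐ - 1) / m`; with `x = q - 1` this is at most `∑_{m=1}^n qᵐ / m`. That sum is
bounded by induction from `n = 5`: appending `qⁿ⁺¹ / (n+1)` keeps the bound because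
`1 / ((q-1)(n-2)) + 1 / (n+1) ≤ q / ((q-1)(n-1))` for `q ≥ 2`, `n ≥ 5`.
-/

open Finset

section Binomial

variable {K : Type*} [Field K] [CharZero K]

theorem sum_range_choose_mul_pow_succ_div (x : K) (n : ℕ) :
    ∑ k ∈ range (n + 1), (n.choose k : K) * x ^ (k + 1) / (k + 1) =
      ((1 + x) ^ (n + 1) - 1) / (n + 1) := by
  have hn : (n + 1 : K) ≠ 0 := n.cast_add_one_ne_zero
  rw [eq_div_iff hn, sum_mul]
  have h_choose (k : ℕ) :
      (n.choose k : K) / (k + 1) * (n + 1) = ((n + 1).choose (k + 1) : K) := by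
    rw [div_mul_eq_mul_div, div_eq_iff k.cast_add_one_ne_zero, mul_comm _ ((n : K) + 1)]
    exact_mod_cast Nat.add_one_mul_choose_eq n k
  have h_binom : (1 + x) ^ (n + 1) = ∑ k ∈ range (n + 2), x ^ k * ((n + 1).choose k : K) := by
    rw [add_comm, add_pow]
    simp_rw [one_pow, mul_one]
  rw [h_binom, sum_range_succ' (fun k => x ^ k * _), Nat.choose_zero_right, Nat.cast_one, pow_zero,
    mul_one, add_sub_cancel_right]
  refine sum_congr rfl fun k _ => ?_
  rw [← h_choose k]
  ring

theorem sum_range_choose_succ_mul_pow_succ_div (x : K) (n : ℕ) :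
    ∑ k ∈ range n, (n.choose (k + 1) : K) * x ^ (k + 1) / (k + 1) =
      ∑ k ∈ range n, ((1 + x) ^ (k + 1) - 1) / (k + 1) := by
  induction n with
  | zero => simp
  | succ n ih =>
    simp_rw [Nat.choose_succ_succ', Nat.cast_add, add_mul, add_div, sum_add_distrib,
      sum_range_choose_mul_pow_succ_div]
    rw [sum_range_succ _ n, Nat.choose_succ_self, sum_range_succ _ n, ih]
    push_cast
    ring

theorem sum_Icc_choose_mul_pow_div (x : K) (n : ℕ) :
    ∑ k ∈ Icc 1 n, (n.choose k : K) * x ^ k / k = ∑ k ∈ Icc 1 n, ((1 + x) ^ k - 1) / k := by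
  simp_rw [← Ico_add_one_right_eq_Icc, sum_Ico_eq_sum_range, Nat.add_sub_cancel, add_comm 1,
    Nat.cast_add_one]
  exact sum_range_choose_succ_mul_pow_succ_div x n

end Binomial

theorem one_div_mul_sub_two_add_one_div_add_one_le (r n : ℝ) (hr : 2 ≤ r) (hn : 5 ≤ n) :
    1 / ((r - 1) * (n - 2)) + 1 / (n + 1) ≤ r / ((r - 1) * (n - 1)) := by
  have h1 : 0 < r - 1 := by linarith
  have h2 : 0 < n - 2 := by linarith
  have h3 : 0 < n + 1 := by linarith
  have h4 : 0 < n - 1 := by linarith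
  rw [div_add_div _ _ (by positivity) (by positivity),
    div_le_div_iff₀ (by positivity) (by positivity)]
  nlinarith [mul_nonneg (sub_nonneg.2 hr) (sub_nonneg.2 hn)]

theorem sum_Icc_pow_div_le (r : ℝ) (hr : 2 ≤ r) {n : ℕ} (hn : 5 ≤ n) :
    ∑ m ∈ Icc 1 n, r ^ m / m ≤ r ^ (n + 1) / ((r - 1) * (n - 2)) := by
  induction n, hn using Nat.le_induction with
  | base =>
    have h_sum : ∑ m ∈ Icc (1 : ℕ) 5, r ^ m / (m : ℝ) =
        r + r ^ 2 / 2 + r ^ 3 / 3 + r ^ 4 / 4 + r ^ 5 / 5 := by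
      norm_num [show Icc 1 5 = {1, 2, 3, 4, 5} by rfl, add_assoc]
    rw [h_sum, le_div_iff₀ (by norm_num; linarith)]
    -- in powers of `s = r - 2` every coefficient on the left is below the one on the right
    obtain ⟨s, hs, rfl⟩ : ∃ s, 0 ≤ s ∧ r = 2 + s := ⟨r - 2, by linarith, by ring⟩
    ring_nf
    linarith [pow_nonneg hs 2, pow_nonneg hs 3, pow_nonneg hs 4, pow_nonneg hs 5, pow_nonneg hs 6]
  | succ n hn ih =>
    have hn' : (5 : ℝ) ≤ n := by exact_mod_cast hn
    rw [sum_Icc_succ_top (by omega)]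
    calc ∑ m ∈ Icc 1 n, r ^ m / m + r ^ (n + 1) / ↑(n + 1)
        ≤ r ^ (n + 1) * (1 / ((r - 1) * (n - 2)) + 1 / (n + 1)) := by
          rw [mul_add, mul_one_div, mul_one_div, Nat.cast_add_one]
          gcongr
      _ ≤ r ^ (n + 1) * (r / ((r - 1) * (n - 1))) := by
          gcongr
          exact one_div_mul_sub_two_add_one_div_add_one_le r n hr hn'
      _ = r ^ (n + 1 + 1) / ((r - 1) * (↑(n + 1) - 2)) := by
          push_cast
          ring

theorem stmt_0_general (q n : ℕ) (hq : 2 ≤ q) (hn : 5 ≤ n) :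
    ∑ k ∈ Finset.Icc 1 n, (n.choose k : ℝ) * ((q : ℝ) - 1) ^ k / k ≤
      (q : ℝ) ^ (n + 1) / (((q : ℝ) - 1) * ((n : ℝ) - 2)) := by
  rw [sum_Icc_choose_mul_pow_div, add_sub_cancel]
  calc ∑ m ∈ Icc 1 n, ((q : ℝ) ^ m - 1) / m
      ≤ ∑ m ∈ Icc 1 n, (q : ℝ) ^ m / m := by
        gcongr ∑ m ∈ Icc 1 n, ?_ with m
        exact div_le_div_of_nonneg_right (sub_le_self _ zero_le_one) m.cast_nonneg
    _ ≤ _ := sum_Icc_pow_div_le q (by exact_mod_cast hq) hn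

theorem stmt_0 (q n : ℕ) (hq : 2 ≤ q) (hn : 5 ≤ n) (hnq : q ≤ n) :
    ∑ k ∈ Finset.Icc 1 n, (n.choose k : ℝ) * ((q : ℝ) - 1) ^ k / k ≤
      (q : ℝ) ^ (n + 1) / (((q : ℝ) - 1) * ((n : ℝ) - 2)) :=
  stmt_0_general q n hq hn
end

section
/- For integers n ≥ 2 and q ≥ 1, the identity ∑_{k=1}^{n} C(n,k) * (q-1)^k / k = ∑_{j=1}^{n} (q^j - 1)/j holds. -/
/-! Differentiating in `x`, both sides of
`∑_{k=1}^n C(n,k) x^k / k = ∑_{j=1}^n ((x+1)^j - 1) / j` become `((x+1)^n - 1) / x`, the left by the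
binomial theorem and the right as a geometric sum. Algebraically this is an induction on `n`:
Pascal's rule splits the left side at `n+1` into the left side at `n` plus
`∑_k C(n,k-1) x^k / k = ∑_k C(n+1,k) x^k / (n+1) = ((x+1)^(n+1) - 1) / (n+1)`. -/

open Finset

theorem sum_Icc_one_choose_mul_pow {R : Type*} [CommRing R] (x : R) (n : ℕ) :
    ∑ k ∈ Icc 1 n, (n.choose k : R) * x ^ k = (x + 1) ^ n - 1 := by
  rw [add_pow, Nat.range_succ_eq_Icc_zero, ← add_sum_Ioc_eq_sum_Icc (Nat.zero_le n),
    ← Icc_add_one_left_eq_Ioc, zero_add]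
  simp [mul_comm]

section CharZero

variable {K : Type*} [Field K] [CharZero K]

theorem Nat.cast_choose_pred_div {n k : ℕ} (hk : 1 ≤ k) :
    (n.choose (k - 1) : K) / k = ((n + 1).choose k : K) / (n + 1) := by
  obtain ⟨m, rfl⟩ := Nat.exists_eq_add_of_le' hk
  have h : ((n + 1 : ℕ) : K) * n.choose m = (n + 1).choose (m + 1) * (m + 1 : ℕ) := by
    exact_mod_cast Nat.add_one_mul_choose_eq n m
  push_cast at h ⊢
  rw [div_eq_div_iff (Nat.cast_add_one_ne_zero m) (Nat.cast_add_one_ne_zero n)]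
  linear_combination h

theorem sum_Icc_one_choose_pred_mul_pow_div (x : K) (n : ℕ) :
    ∑ k ∈ Icc 1 (n + 1), (n.choose (k - 1) : K) * x ^ k / k = ((x + 1) ^ (n + 1) - 1) / (n + 1) :=
  calc ∑ k ∈ Icc 1 (n + 1), (n.choose (k - 1) : K) * x ^ k / k
      = ∑ k ∈ Icc 1 (n + 1), ((n + 1).choose k : K) * x ^ k / (n + 1) :=
        sum_congr rfl fun k hk => by
          rw [mul_div_right_comm, Nat.cast_choose_pred_div (mem_Icc.mp hk).1, div_mul_eq_mul_div]
    _ = ((x + 1) ^ (n + 1) - 1) / (n + 1) := by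
        rw [← sum_div, ← Nat.cast_add_one, sum_Icc_one_choose_mul_pow]

theorem sum_Icc_one_choose_mul_pow_div (x : K) (n : ℕ) :
    ∑ k ∈ Icc 1 n, (n.choose k : K) * x ^ k / k = ∑ j ∈ Icc 1 n, ((x + 1) ^ j - 1) / j := by
  induction n with
  | zero => simp
  | succ n ih =>
    have pascal : ∀ k ∈ Icc 1 (n + 1), ((n + 1).choose k : K) * x ^ k / k
        = (n.choose k : K) * x ^ k / k + (n.choose (k - 1) : K) * x ^ k / k := fun k hk => by
      rw [Nat.choose_succ_left _ _ (mem_Icc.mp hk).1]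
      push_cast
      ring
    rw [sum_congr rfl pascal, sum_add_distrib, sum_Icc_one_choose_pred_mul_pow_div,
      sum_Icc_succ_top (by omega), sum_Icc_succ_top (by omega), Nat.choose_succ_self, ih]
    push_cast
    ring

end CharZero

theorem stmt_1_general (n q : ℕ) :
    ∑ k ∈ Finset.Icc 1 n, (n.choose k : ℚ) * ((q : ℚ) - 1) ^ k / k =
      ∑ j ∈ Finset.Icc 1 n, ((q : ℚ) ^ j - 1) / j := by
  simpa using sum_Icc_one_choose_mul_pow_div ((q : ℚ) - 1) n

theorem stmt_1 (n q : ℕ) (hn : 2 ≤ n) (hq : 1 ≤ q) :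
    ∑ k ∈ Finset.Icc 1 n, (n.choose k : ℚ) * ((q : ℚ) - 1) ^ k / k =
      ∑ j ∈ Finset.Icc 1 n, ((q : ℚ) ^ j - 1) / j :=
  stmt_1_general n q
end

section
/- Let x be a word of length n over an alphabet of size q ≥ 2 and y be any word obtained from x by one deletion followed by at most s substitutions. Then r(x) - (2 + 2s) ≤ r(y) ≤ r(x) + 2s, where r(w) denotes the number of maximal runs of w. -/
/-- Word obtained from `x` by deleting the symbol at position `d`. -/
def delAt {α : Type*} {n : ℕ} (x : Fin (n + 1) → α) (d : Fin (n + 1)) : Fin n → α :=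
  x ∘ d.succAbove

/-- The set of words obtainable from `x` by one deletion followed by at most `s` substitutions. -/
def ballDS {q n : ℕ} (s : ℕ) (x : Fin (n + 1) → Fin q) : Set (Fin n → Fin q) :=
  { y | ∃ d : Fin (n + 1), hammingDist (delAt x d) y ≤ s }

/-- Number of maximal runs of a (nonempty) word. -/
def runs {α : Type*} {n : ℕ} [DecidableEq α] (x : Fin (n + 1) → α) : ℕ :=
  1 + (Finset.univ.filter fun i : Fin n => x i.castSucc ≠ x i.succ).card

/-! Write `runs w = 1 + hammingDist (Fin.init w) (Fin.tail w)`. A substitution changes `Fin.init w`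
and `Fin.tail w` in at most one position each, so by the triangle inequality it moves the number of
runs by at most two. Deleting `x d` replaces the boundary indicators `[x (d-1) ≠ x d] + [x d ≠ x (d+1)]`
by the single `[x (d-1) ≠ x (d+1)]`, which lies between `0` and their sum, so a deletion lowers the
number of runs by at most two and never raises it. -/

open Function

theorem hammingDist_comp_le_of_injective {ι κ β : Type*} [Fintype ι] [Fintype κ] [DecidableEq β]
    {f : κ → ι} (hf : Injective f) (x y : ι → β) :
    hammingDist (x ∘ f) (y ∘ f) ≤ hammingDist x y :=
  Finset.card_le_card_of_injOn f (fun k hk => by simpa using hk) hf.injOn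

section Runs

variable {α : Type*}

theorem delAt_cons_zero {n : ℕ} (a : α) (w : Fin (n + 1) → α) :
    delAt (Fin.cons a w : Fin (n + 2) → α) 0 = w := by
  ext i; simp [delAt]

theorem delAt_cons_succ {n : ℕ} (a : α) (w : Fin (n + 1) → α) (d : Fin (n + 1)) :
    delAt (Fin.cons a w : Fin (n + 2) → α) d.succ = Fin.cons a (delAt w d) := by
  ext i; cases i using Fin.cases <;> simp [delAt]

variable [DecidableEq α]

theorem runs_eq_one_add_hammingDist {n : ℕ} (w : Fin (n + 1) → α) :
    runs w = 1 + hammingDist (Fin.init w) (Fin.tail w) := rfl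

theorem runs_le_runs_add_two_mul_hammingDist {n : ℕ} (z y : Fin (n + 1) → α) :
    runs y ≤ runs z + 2 * hammingDist z y := by
  have hinit : hammingDist (Fin.init y) (Fin.init z) ≤ hammingDist z y := by
    rw [hammingDist_comm z]
    exact hammingDist_comp_le_of_injective (Fin.castSucc_injective n) y z
  have htail : hammingDist (Fin.tail z) (Fin.tail y) ≤ hammingDist z y :=
    hammingDist_comp_le_of_injective (Fin.succ_injective n) z y
  have h₁ := hammingDist_triangle (Fin.init y) (Fin.init z) (Fin.tail y)
  have h₂ := hammingDist_triangle (Fin.init z) (Fin.tail z) (Fin.tail y)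
  rw [runs_eq_one_add_hammingDist, runs_eq_one_add_hammingDist]
  omega

theorem runs_le {n : ℕ} (w : Fin (n + 1) → α) : runs w ≤ n + 1 := by
  have := hammingDist_le_card_fintype (x := Fin.init w) (y := Fin.tail w)
  rw [runs_eq_one_add_hammingDist, Fintype.card_fin] at *
  omega

theorem runs_cons {n : ℕ} (a : α) (w : Fin (n + 1) → α) :
    runs (Fin.cons a w : Fin (n + 2) → α) = runs w + if a = w 0 then 0 else 1 := by
  simp only [runs, Finset.card_filter, Fin.sum_univ_succ, Fin.castSucc_zero, Fin.cons_zero,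
    ne_eq, ite_not, Fin.castSucc_succ, Fin.cons_succ]
  omega

theorem ite_eq_zero_one_triangle {a b c : α} :
    (if a = c then 0 else 1) ≤ (if a = b then 0 else 1) + (if b = c then 0 else 1) := by
  split_ifs <;> simp_all

theorem runs_delAt_le_and_le_add_two {n : ℕ} (x : Fin (n + 2) → α) (d : Fin (n + 2)) :
    runs (delAt x d) ≤ runs x ∧ runs x ≤ runs (delAt x d) + 2 := by
  induction n with
  | zero =>
    have h₀ : runs (delAt x d) = 1 := by simp [runs]
    have := runs_le x
    have : 1 ≤ runs x := Nat.le_add_right 1 _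
    omega
  | succ m ih =>
    induction x using Fin.consCases with | cons a w =>
    cases d using Fin.cases with
    | zero =>
      rw [delAt_cons_zero, runs_cons]
      split_ifs <;> omega
    | succ d =>
      rw [delAt_cons_succ, runs_cons, runs_cons]
      cases d using Fin.cases with
      | zero =>
        induction w using Fin.consCases with | cons b u =>
        rw [delAt_cons_zero, runs_cons]
        have := ite_eq_zero_one_triangle (a := a) (b := b) (c := u 0)
        simp only [Fin.cons_zero]
        split_ifs at * <;> omega
      | succ d =>
        have hw0 : delAt w d.succ 0 = w 0 := congrArg w (Fin.succ_succAbove_zero d)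
        rw [hw0]
        have := ih w d.succ
        omega

end Runs

theorem stmt_2 (q n s : ℕ) (x : Fin (n + 2) → Fin q) (y : Fin (n + 1) → Fin q)
    (hy : y ∈ ballDS s x) :
    (runs x : ℤ) - (2 + 2 * s) ≤ (runs y : ℤ) ∧ (runs y : ℤ) ≤ (runs x : ℤ) + 2 * s := by
  obtain ⟨d, hd⟩ := hy
  obtain ⟨hdel₁, hdel₂⟩ := runs_delAt_le_and_le_add_two x d
  have hsub₁ := runs_le_runs_add_two_mul_hammingDist (delAt x d) y
  have hsub₂ := runs_le_runs_add_two_mul_hammingDist y (delAt x d)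
  rw [hammingDist_comm] at hsub₂
  omega
end

section
/- For a word x of length n over an alphabet of size q ≥ 2 with r(x) ≥ 2 runs, the number of distinct words obtainable from x by one deletion and at most one substitution equals r(x)·[(n-3)(q-1) + (q-2)] + (q+2). -/
/-!
Deleting any symbol of a run gives the same word, so the deletions of `x` are the `r` words
`z₀, …, z_{r-1}` obtained by deleting at the last positions of the runs, and `z_j`, `z_k`
(`j ≤ k`) differ exactly at the `k - j` run ends in between: the `z_j` lie on a Hamming geodesic.
`B^{DS}_{1,1}(x)` is the union of the radius-one Hamming balls `B(z_j)`, each of size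
`b = 1 + (n - 1)(q - 1)`. Adjacent balls meet in `q` words; balls two apart meet in two words,
one of which is the middle centre; balls further apart are disjoint. Adding the balls one at a
time therefore contributes `b`, then `b - q`, then `b - (q + 1)` new words for each later ball.
-/

open Finset Function

section HammingBall

variable {ι α : Type*} [Fintype ι] [DecidableEq α]

lemma hammingDist_le_one_iff {z y : ι → α} :
    hammingDist z y ≤ 1 ↔ ∀ i, z i ≠ y i → ∀ j, z j ≠ y j → i = j := by
  simp [hammingDist, card_le_one]

lemma hammingDist_le_one_of_forall_ne {z y : ι → α} (p : ι) (h : ∀ i ≠ p, z i = y i) :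
    hammingDist z y ≤ 1 :=
  hammingDist_le_one_iff.2 fun i hi j hj => by grind

lemma exists_of_hammingDist_eq_one {z w : ι → α} (h : hammingDist z w = 1) :
    ∃ p, z p ≠ w p ∧ ∀ i ≠ p, z i = w i := by
  obtain ⟨p, hp⟩ := card_eq_one.1 h
  simp only [Finset.ext_iff, mem_filter, mem_univ, true_and, mem_singleton] at hp
  exact ⟨p, (hp p).2 rfl, fun i hi => not_not.1 (mt (hp i).1 hi)⟩

variable [DecidableEq ι]

lemma hammingDist_update_le_one (z : ι → α) (p : ι) (a : α) :
    hammingDist z (update z p a) ≤ 1 :=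
  hammingDist_le_one_of_forall_ne p fun _ hi => (update_of_ne hi _ _).symm

lemma exists_of_hammingDist_eq_two {z w : ι → α} (h : hammingDist z w = 2) :
    ∃ p p', p ≠ p' ∧ z p ≠ w p ∧ z p' ≠ w p' ∧
      ∀ i, i ≠ p → i ≠ p' → z i = w i := by
  obtain ⟨p, p', hne, hp⟩ := card_eq_two.1 h
  simp only [Finset.ext_iff, mem_filter, mem_univ, true_and, mem_insert, mem_singleton] at hp
  exact ⟨p, p', hne, (hp p).2 (.inl rfl), (hp p').2 (.inr rfl),
    fun i hi hi' => not_not.1 (mt (hp i).1 (by tauto))⟩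

variable [Fintype α]

def hammingBallOne (z : ι → α) : Finset (ι → α) :=
  {y | hammingDist z y ≤ 1}

@[simp]
lemma mem_hammingBallOne {z y : ι → α} :
    y ∈ hammingBallOne z ↔ hammingDist z y ≤ 1 := by
  simp [hammingBallOne]

lemma card_hammingBallOne (z : ι → α) :
    #(hammingBallOne z) = 1 + Fintype.card ι * (Fintype.card α - 1) := by
  set S := univ.sigma fun i : ι => univ.erase (z i)
  have hinj : Set.InjOn (fun s : Σ _ : ι, α => update z s.1 s.2) S := by
    rintro ⟨i, a⟩ hia ⟨j, b⟩ - hij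
    simp only [S, mem_coe, mem_sigma, mem_univ, mem_erase, and_true, true_and] at hia hij
    obtain rfl : i = j := by
      by_contra hne
      simpa [update_of_ne hne, hia] using congrFun hij i
    simpa using congrFun hij i
  have hball : hammingBallOne z = insert z (S.image fun s => update z s.1 s.2) := by
    ext y
    simp only [mem_hammingBallOne, mem_insert, mem_image, S, mem_sigma, mem_univ, mem_erase,
      and_true, true_and, Sigma.exists]
    constructor
    · intro hy
      by_cases hyz : y = z
      · exact .inl hyz
      obtain ⟨p, hp⟩ : ∃ p, z p ≠ y p := by
        by_contra! h
        exact hyz (funext fun i => (h i).symm)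
      refine .inr ⟨p, y p, hp.symm, ?_⟩
      rw [update_eq_iff]
      exact ⟨rfl, fun i hi => by_contra fun h => hi (hammingDist_le_one_iff.1 hy i h p hp)⟩
    · rintro (rfl | ⟨i, a, -, rfl⟩)
      · simp
      · exact hammingDist_update_le_one z i a
  have hz : z ∉ S.image fun s => update z s.1 s.2 := by
    simp only [S, mem_image, mem_sigma, mem_univ, mem_erase, and_true, true_and, Sigma.exists,
      not_exists, not_and]
    exact fun i a ha h => ha (by simpa using congrFun h i)
  rw [hball, card_insert_of_notMem hz, card_image_of_injOn hinj, card_sigma]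
  simp [add_comm]

lemma card_hammingBallOne_inter_of_hammingDist_eq_one {z w : ι → α} (h : hammingDist z w = 1) :
    #(hammingBallOne z ∩ hammingBallOne w) = Fintype.card α := by
  obtain ⟨p, hp, hoff⟩ := exists_of_hammingDist_eq_one h
  have hinter : hammingBallOne z ∩ hammingBallOne w = univ.image (update z p) := by
    ext y
    simp only [mem_inter, mem_hammingBallOne, mem_image, mem_univ, true_and]
    constructor
    · rintro ⟨hzy, hwy⟩
      refine ⟨y p, (update_eq_iff.2 ⟨rfl, fun i hi => ?_⟩)⟩
      by_contra hne
      have hyp : z p = y p := by_contra fun h' => hi (hammingDist_le_one_iff.1 hzy i hne p h')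
      exact hi (hammingDist_le_one_iff.1 hwy i (hoff i hi ▸ hne) p (hyp ▸ Ne.symm hp))
    · rintro ⟨a, rfl⟩
      exact ⟨hammingDist_update_le_one z p a,
        hammingDist_le_one_of_forall_ne p fun i hi => by rw [update_of_ne hi, hoff i hi]⟩
  rw [hinter, card_image_of_injective _ (update_injective z p), card_univ]

lemma exists_hammingBallOne_inter_eq_pair {z v : ι → α} (h : hammingDist z v = 2) :
    ∃ u u', 1 < hammingDist u u' ∧ hammingBallOne z ∩ hammingBallOne v = {u, u'} := by
  obtain ⟨p, p', hne, hp, hp', hoff⟩ := exists_of_hammingDist_eq_two h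
  refine ⟨update z p (v p), update z p' (v p'), ?_, ?_⟩
  · refine lt_of_not_ge fun h1 => hne (hammingDist_le_one_iff.1 h1 p ?_ p' ?_)
    · simpa [update_of_ne hne] using hp.symm
    · simpa [update_of_ne hne.symm] using hp'
  ext y
  simp only [mem_inter, mem_hammingBallOne, mem_insert, mem_singleton, eq_update_iff]
  constructor
  · rintro ⟨hzy, hvy⟩
    rw [hammingDist_le_one_iff] at hzy hvy
    have hagree : ∀ i, i ≠ p → i ≠ p' → y i = z i := by
      intro i hi hi'
      by_contra hyz
      have hzp : z p = y p := by_contra fun h => hi (hzy i (Ne.symm hyz) p h)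
      have hzp' : z p' = y p' := by_contra fun h => hi' (hzy i (Ne.symm hyz) p' h)
      exact hne (hvy p (hzp ▸ Ne.symm hp) p' (hzp' ▸ Ne.symm hp'))
    grind
  · rintro (⟨hyp, hy⟩ | ⟨hyp', hy⟩)
    · exact ⟨hammingDist_le_one_of_forall_ne p fun i hi => (hy i hi).symm,
        hammingDist_le_one_of_forall_ne p' fun i hi' => by
          rcases eq_or_ne i p with rfl | hi <;> grind⟩
    · exact ⟨hammingDist_le_one_of_forall_ne p' fun i hi => (hy i hi).symm,
        hammingDist_le_one_of_forall_ne p fun i hi => by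
          rcases eq_or_ne i p' with rfl | hi' <;> grind⟩

lemma disjoint_hammingBallOne {z v : ι → α} (h : 3 ≤ hammingDist z v) :
    Disjoint (hammingBallOne z) (hammingBallOne v) := by
  refine disjoint_left.2 fun y hz hv => ?_
  rw [mem_hammingBallOne] at hz hv
  have := hammingDist_triangle z y v
  rw [hammingDist_comm y v] at this
  omega

lemma card_hammingBallOne_union_inter {z w v : ι → α} (hzw : hammingDist z w = 1)
    (hwv : hammingDist w v = 1) (hzv : hammingDist z v = 2) :
    #((hammingBallOne z ∪ hammingBallOne w) ∩ hammingBallOne v) = Fintype.card α + 1 := by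
  obtain ⟨u, u', hu, hpair⟩ := exists_hammingBallOne_inter_eq_pair hzv
  have hw : w ∈ hammingBallOne z ∩ hammingBallOne v := by
    simp [hzw, hammingDist_comm v w, hwv]
  have htriple : (hammingBallOne z ∩ hammingBallOne v) ∩ (hammingBallOne w ∩ hammingBallOne v)
      = {w} := by
    refine eq_singleton_iff_unique_mem.2
      ⟨mem_inter.2 ⟨hw, by simp [hammingDist_comm v w, hwv]⟩, fun y hy => ?_⟩
    have hwy : hammingDist w y ≤ 1 := by simpa using (mem_inter.1 (mem_inter.1 hy).2).1
    have hy' := (mem_inter.1 hy).1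
    rw [hpair] at hw hy'
    simp only [mem_insert, mem_singleton] at hw hy'
    by_contra hne
    rcases hw with rfl | rfl <;> rcases hy' with rfl | rfl <;>
      first | exact hne rfl | omega | (rw [hammingDist_comm] at hwy; omega)
  have hcard := card_union_add_card_inter (hammingBallOne z ∩ hammingBallOne v)
    (hammingBallOne w ∩ hammingBallOne v)
  rw [htriple, card_singleton, card_hammingBallOne_inter_of_hammingDist_eq_one hwv, hpair,
    card_pair (fun h => by simp [h] at hu), ← hpair, ← union_inter_distrib_right] at hcard
  omega

lemma card_biUnion_hammingBallOne_of_geodesic (z : ℕ → ι → α) (m : ℕ)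
    (hz : ∀ j k, j ≤ k → k < m + 2 → hammingDist (z j) (z k) = k - j) :
    #((range (m + 2)).biUnion fun j => hammingBallOne (z j)) + (m + 1) * (Fintype.card α + 1) =
      (m + 2) * (1 + Fintype.card ι * (Fintype.card α - 1)) + 1 := by
  induction m with
  | zero =>
    have hcard := card_union_add_card_inter (hammingBallOne (z 1)) (hammingBallOne (z 0))
    rw [inter_comm, card_hammingBallOne_inter_of_hammingDist_eq_one (hz 0 1 zero_le_one
      one_lt_two), card_hammingBallOne, card_hammingBallOne] at hcard
    simp only [range_add_one, range_zero, insert_empty_eq, biUnion_insert, singleton_biUnion]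
    omega
  | succ m ih =>
    specialize ih fun j k hjk hk => hz j k hjk (by omega)
    have hfar : Disjoint ((range m).biUnion fun j => hammingBallOne (z j))
        (hammingBallOne (z (m + 2))) := by
      refine (disjoint_biUnion_left _ _ _).2 fun j hj => disjoint_hammingBallOne ?_
      rw [mem_range] at hj
      rw [hz j (m + 2) (by omega) (by omega)]
      omega
    have hnew : #(((range (m + 2)).biUnion fun j => hammingBallOne (z j)) ∩
        hammingBallOne (z (m + 2))) = Fintype.card α + 1 := by
      rw [range_add_one, range_add_one, biUnion_insert, biUnion_insert, ← union_assoc,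
        union_comm, union_inter_distrib_right, disjoint_iff_inter_eq_empty.1 hfar, empty_union,
        union_comm]
      exact card_hammingBallOne_union_inter (by rw [hz m (m + 1) (by omega) (by omega)]; omega)
        (by rw [hz (m + 1) (m + 2) (by omega) (by omega)]; omega)
        (by rw [hz m (m + 2) (by omega) (by omega)]; omega)
    have hcard := card_union_add_card_inter (hammingBallOne (z (m + 2)))
      ((range (m + 2)).biUnion fun j => hammingBallOne (z j))
    rw [inter_comm, hnew, card_hammingBallOne] at hcard
    rw [show m + 1 + 2 = m + 2 + 1 by rfl, range_add_one, biUnion_insert]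
    linarith

end HammingBall

section Runs

variable {α : Type*} {n : ℕ}

def runEnds [DecidableEq α] (x : Fin (n + 1) → α) : Finset (Fin (n + 1)) :=
  insert (Fin.last n) ((univ.filter fun i : Fin n => x i.castSucc ≠ x i.succ).map Fin.castSuccEmb)

lemma card_runEnds [DecidableEq α] (x : Fin (n + 1) → α) : #(runEnds x) = runs x := by
  rw [runEnds, card_insert_of_notMem (by simp), card_map, runs, add_comm]

lemma delAt_apply_ne_iff (x : Fin (n + 1) → α) {d d' : Fin (n + 1)} (h : d ≤ d') (i : Fin n) :
    delAt x d i ≠ delAt x d' i ↔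
      x i.castSucc ≠ x i.succ ∧ d ≤ i.castSucc ∧ i.castSucc < d' := by
  simp only [delAt, comp_apply]
  rcases lt_or_ge i.castSucc d with hd | hd
  · rw [Fin.succAbove_of_castSucc_lt _ _ hd, Fin.succAbove_of_castSucc_lt _ _ (hd.trans_le h)]
    simp [hd.not_ge]
  rcases lt_or_ge i.castSucc d' with hd' | hd'
  · rw [Fin.succAbove_of_le_castSucc _ _ hd, Fin.succAbove_of_castSucc_lt _ _ hd']
    simp [hd, hd', ne_comm]
  · rw [Fin.succAbove_of_le_castSucc _ _ hd, Fin.succAbove_of_le_castSucc _ _ hd']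
    simp [hd'.not_gt]

lemma hammingDist_delAt_delAt [DecidableEq α] (x : Fin (n + 1) → α) {d d' : Fin (n + 1)}
    (h : d ≤ d') :
    hammingDist (delAt x d) (delAt x d') = #{e ∈ runEnds x | d ≤ e ∧ e < d'} := by
  have hlast : ¬ Fin.last n < d' := not_lt.2 (Fin.le_last d')
  rw [hammingDist, runEnds, filter_insert, if_neg (by simp [hlast]), filter_map, card_map,
    filter_filter]
  simp only [delAt_apply_ne_iff x h]
  rfl

lemma exists_mem_runEnds_delAt_eq [DecidableEq α] (x : Fin (n + 1) → α) (d : Fin (n + 1)) :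
    ∃ e ∈ runEnds x, delAt x d = delAt x e := by
  have hne : ({e ∈ runEnds x | d ≤ e} : Finset _).Nonempty :=
    ⟨Fin.last n, by simp [runEnds, Fin.le_last]⟩
  set e := ({e ∈ runEnds x | d ≤ e} : Finset _).min' hne
  have he := mem_filter.1 (min'_mem _ hne)
  refine ⟨e, he.1, hammingDist_eq_zero.1 ?_⟩
  rw [hammingDist_delAt_delAt x he.2, card_eq_zero, filter_eq_empty_iff]
  exact fun e' he' ⟨hde', he'e⟩ => (min'_le _ e' (mem_filter.2 ⟨he', hde'⟩)).not_gt he'e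

lemma ballDS_one_eq_biUnion {q : ℕ} (x : Fin (n + 1) → Fin q) :
    ballDS 1 x = ↑((runEnds x).biUnion fun e => hammingBallOne (delAt x e)) := by
  ext y
  simp only [ballDS, Set.mem_ofPred_eq, coe_biUnion, mem_coe, Set.mem_iUnion, mem_hammingBallOne,
    exists_prop]
  constructor
  · rintro ⟨d, hd⟩
    obtain ⟨e, he, hde⟩ := exists_mem_runEnds_delAt_eq x d
    exact ⟨e, he, hde ▸ hd⟩
  · rintro ⟨e, -, he⟩
    exact ⟨e, he⟩

end Runs

section Enumeration

variable {β : Type*} [LinearOrder β]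

lemma Finset.exists_strictMonoOn_image_range [Nonempty β] (s : Finset β) :
    ∃ g : ℕ → β, StrictMonoOn g (Set.Iio #s) ∧ (range #s).image g = s := by
  let f := s.orderEmbOfFin rfl
  refine ⟨fun j => if h : j < #s then f ⟨j, h⟩ else Classical.arbitrary β, ?_, ?_⟩
  · intro j hj k hk hjk
    simp only [Set.mem_Iio] at hj hk
    simpa [dif_pos hj, dif_pos hk] using hjk
  · ext e
    simp only [mem_image, mem_range]
    constructor
    · rintro ⟨j, hj, rfl⟩
      rw [dif_pos hj]
      exact s.orderEmbOfFin_mem rfl ⟨j, hj⟩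
    · intro he
      obtain ⟨⟨j, hj⟩, rfl⟩ : e ∈ Set.range f := by rwa [s.range_orderEmbOfFin]
      exact ⟨j, hj, dif_pos hj⟩

lemma card_filter_image_range_of_strictMonoOn {g : ℕ → β} {r : ℕ}
    (hg : StrictMonoOn g (Set.Iio r)) {j k : ℕ} (hk : k < r) (hjk : j ≤ k) :
    #{e ∈ (range r).image g | g j ≤ e ∧ e < g k} = k - j := by
  have hj : j ∈ Set.Iio r := hjk.trans_lt hk
  have hinj : Set.InjOn g ↑({i ∈ range r | g j ≤ g i ∧ g i < g k} : Finset ℕ) :=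
    hg.injOn.mono fun i hi => mem_range.1 (mem_filter.1 (mem_coe.1 hi)).1
  rw [filter_image, card_image_of_injOn hinj, ← Nat.card_Ico]
  congr 1
  ext i
  simp only [mem_filter, mem_range, mem_Ico]
  constructor
  · rintro ⟨hi, h1, h2⟩
    exact ⟨(hg.le_iff_le hj hi).1 h1, (hg.lt_iff_lt hi hk).1 h2⟩
  · rintro ⟨h1, h2⟩
    have hi : i < r := h2.trans hk
    exact ⟨hi, (hg.le_iff_le hj hi).2 h1, (hg.lt_iff_lt hi hk).2 h2⟩

end Enumeration

theorem stmt_4 (q n : ℕ) (hq : 2 ≤ q) (x : Fin (n + 1) → Fin q) (hr : 2 ≤ runs x) :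
    ((ballDS 1 x).ncard : ℤ) =
      (runs x : ℤ) * ((((n : ℤ) + 1) - 3) * ((q : ℤ) - 1) + ((q : ℤ) - 2)) + ((q : ℤ) + 2) := by
  obtain ⟨g, hg, himg⟩ := (runEnds x).exists_strictMonoOn_image_range
  rw [card_runEnds] at hg himg
  obtain ⟨m, hm⟩ : ∃ m, runs x = m + 2 := ⟨runs x - 2, by omega⟩
  rw [hm] at hg himg
  have hgeod : ∀ j k, j ≤ k → k < m + 2 →
      hammingDist (delAt x (g j)) (delAt x (g k)) = k - j := fun j k hjk hk => by
    rw [hammingDist_delAt_delAt x ((hg.le_iff_le (hjk.trans_lt hk) hk).2 hjk), ← himg,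
      card_filter_image_range_of_strictMonoOn hg hk hjk]
  have hcard := card_biUnion_hammingBallOne_of_geodesic (fun j => delAt x (g j)) m hgeod
  rw [Fintype.card_fin, Fintype.card_fin] at hcard
  rw [ballDS_one_eq_biUnion, ← himg, image_biUnion, Set.ncard_coe_finset, hm]
  have hcardℤ := congrArg (Nat.cast : ℕ → ℤ) hcard
  push_cast [Nat.cast_sub (by omega : 1 ≤ q)] at hcardℤ ⊢
  linear_combination hcardℤ
end

section
/- Let S1, S2, S3 be finite sets of integers such that for all i ∈ S1, j ∈ S2, k ∈ S3 we have i < j < k. If ∑_{j∈S1} j^m + ∑_{j∈S2} j^m = ∑_{j∈S3} j^m for all m ∈ {0,1,2}, then S1, S2, S3 are all empty. -/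
/-! Count `S1` and `S2` together as the multiset `S1 + S2`. If it were nonempty, the `m = 0`
equation gives it as many elements as `S3`, and every element of `S3` exceeds every element of it,
so the right side of the `m = 1` equation would be strictly larger than the left. -/

theorem Multiset.sum_lt_sum_of_card_eq_of_forall_lt {M : Type*} [AddCommMonoid M] [LinearOrder M]
    [IsOrderedCancelAddMonoid M] {s t : Multiset M} (hcard : card s = card t) (hs : s ≠ 0)
    (hlt : ∀ a ∈ s, ∀ b ∈ t, a < b) : s.sum < t.sum := by
  have hs' : s.toFinset.Nonempty := by simpa [Multiset.toFinset_nonempty] using hs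
  have ht' : t.toFinset.Nonempty := by
    rw [Multiset.toFinset_nonempty, ← Multiset.card_pos, ← hcard, Multiset.card_pos]
    exact hs
  set a := s.toFinset.max' hs'
  set b := t.toFinset.min' ht'
  have hab : a < b := hlt a (by simpa using s.toFinset.max'_mem hs') b
    (by simpa using t.toFinset.min'_mem ht')
  calc s.sum ≤ card s • a :=
        Multiset.sum_le_card_nsmul s a fun x hx => s.toFinset.le_max' x (by simpa using hx)
    _ < card s • b := nsmul_lt_nsmul_right (Multiset.card_pos.mpr hs).ne' hab
    _ = card t • b := by rw [hcard]
    _ ≤ t.sum :=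
        Multiset.card_nsmul_le_sum fun x hx => t.toFinset.min'_le x (by simpa using hx)

theorem stmt_8_general (S1 S2 S3 : Finset ℤ)
    (h23 : ∀ j ∈ S2, ∀ k ∈ S3, j < k)
    (h13 : ∀ i ∈ S1, ∀ k ∈ S3, i < k)
    (hsum : ∀ m ∈ ({0, 1, 2} : Finset ℕ),
      ∑ j ∈ S1, j ^ m + ∑ j ∈ S2, j ^ m = ∑ j ∈ S3, j ^ m) :
    S1 = ∅ ∧ S2 = ∅ ∧ S3 = ∅ := by
  have hcard : S1.card + S2.card = S3.card := by
    exact_mod_cast (show (S1.card + S2.card : ℤ) = S3.card by simpa using hsum 0 (by simp))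
  have hsum1 : (S1.val + S2.val).sum = S3.val.sum := by simpa using hsum 1 (by simp)
  have hlt : ∀ a ∈ S1.val + S2.val, ∀ b ∈ S3.val, a < b := by
    intro a ha b hb
    rcases Multiset.mem_add.mp ha with ha | ha
    exacts [h13 a ha b hb, h23 a ha b hb]
  have hempty : S1.val + S2.val = 0 := by
    by_contra hne
    exact (Multiset.sum_lt_sum_of_card_eq_of_forall_lt (by simpa using hcard) hne hlt).ne hsum1
  obtain ⟨h1, h2⟩ := add_eq_zero.mp hempty
  have h3 : S3.card = 0 := by simp [← hcard, Finset.card_eq_zero, ← Finset.val_eq_zero, h1, h2]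
  exact ⟨Finset.val_eq_zero.mp h1, Finset.val_eq_zero.mp h2, Finset.card_eq_zero.mp h3⟩

theorem stmt_8 (S1 S2 S3 : Finset ℤ)
    (h12 : ∀ i ∈ S1, ∀ j ∈ S2, i < j)
    (h23 : ∀ j ∈ S2, ∀ k ∈ S3, j < k)
    (h13 : ∀ i ∈ S1, ∀ k ∈ S3, i < k)
    (hsum : ∀ m ∈ ({0, 1, 2} : Finset ℕ),
      ∑ j ∈ S1, j ^ m + ∑ j ∈ S2, j ^ m = ∑ j ∈ S3, j ^ m) :
    S1 = ∅ ∧ S2 = ∅ ∧ S3 = ∅ :=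
  stmt_8_general S1 S2 S3 h23 h13 hsum
end

section
/- Let S1, S2, S3 be finite sets of integers with i < j < k for all i ∈ S1, j ∈ S2, k ∈ S3. Then the determinant of the 3×3 matrix whose m-th row (m = 0,1,2) is (∑_{j∈S1} j^m, ∑_{j∈S2} j^m, ∑_{j∈S3} j^m) equals ∑_{i∈S1} ∑_{j∈S2} ∑_{k∈S3} (j-i)(k-j)(k-i), and is nonnegative; it is strictly positive if all three sets are nonempty. -/
/-!
Column `c` of the power-sum matrix is `∑ x ∈ S c, (1, x, x²)`, so by multilinearity of the
determinant in the columns it is the sum, over all choices `x₁ ∈ S₁, x₂ ∈ S₂, x₃ ∈ S₃`, of the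
Vandermonde determinants `(x₂ - x₁)(x₃ - x₂)(x₃ - x₁)`, each of which is positive when
`x₁ < x₂ < x₃`.
-/

open Finset Fintype Matrix

theorem det_of_sum_pow_eq_sum_det_vandermonde {R : Type*} [CommRing R] [DecidableEq R] {n : ℕ}
    (S : Fin n → Finset R) :
    det (of fun (m c : Fin n) => ∑ x ∈ S c, x ^ (m : ℕ)) =
      ∑ r ∈ piFinset S, det (vandermonde r) := by
  have hT : (of fun (m c : Fin n) => ∑ x ∈ S c, x ^ (m : ℕ))ᵀ =
      fun c => ∑ x ∈ S c, fun m : Fin n => x ^ (m : ℕ) := by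
    ext c m; simp
  rw [← det_transpose, hT]
  exact (detRowAlternating : (Fin n → R) [⋀^Fin n]→ₗ[R] R).map_sum_finset _ S

theorem sum_piFinset_fin_three {α M : Type*} [DecidableEq α] [AddCommMonoid M]
    (A B C : Finset α) (f : (Fin 3 → α) → M) :
    ∑ r ∈ piFinset ![A, B, C], f r = ∑ a ∈ A, ∑ b ∈ B, ∑ c ∈ C, f ![a, b, c] := by
  simp_rw [← sum_product']
  refine sum_nbij' (fun r => (r 0, r 1, r 2)) (fun p => ![p.1, p.2.1, p.2.2]) ?_ ?_ ?_ ?_ ?_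
  · intro r hr
    simp only [mem_piFinset] at hr
    simp only [mem_product]
    exact ⟨hr 0, hr 1, hr 2⟩
  · intro p hp
    simp only [mem_product] at hp
    simp [mem_piFinset, Fin.forall_fin_succ, hp]
  · intro r _; ext i; fin_cases i <;> rfl
  · intro p _; rfl
  · intro r _; congr; ext i; fin_cases i <;> rfl

theorem det_vandermonde_fin_three {R : Type*} [CommRing R] (a b c : R) :
    det (vandermonde ![a, b, c]) = (b - a) * (c - b) * (c - a) := by
  rw [det_fin_three]
  simp [vandermonde_apply]
  ring

theorem stmt_10_general (S1 S2 S3 : Finset ℤ)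
    (h12 : ∀ i ∈ S1, ∀ j ∈ S2, i < j)
    (h23 : ∀ j ∈ S2, ∀ k ∈ S3, j < k) :
    (Matrix.det (Matrix.of fun (m c : Fin 3) => ∑ j ∈ ![S1, S2, S3] c, j ^ (m : ℕ))
        = ∑ i ∈ S1, ∑ j ∈ S2, ∑ k ∈ S3, (j - i) * (k - j) * (k - i)) ∧
      0 ≤ Matrix.det (Matrix.of fun (m c : Fin 3) => ∑ j ∈ ![S1, S2, S3] c, j ^ (m : ℕ)) ∧
      (S1.Nonempty → S2.Nonempty → S3.Nonempty →
        0 < Matrix.det (Matrix.of fun (m c : Fin 3) => ∑ j ∈ ![S1, S2, S3] c, j ^ (m : ℕ))) := by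
  have hdet : det (of fun (m c : Fin 3) => ∑ j ∈ ![S1, S2, S3] c, j ^ (m : ℕ))
      = ∑ i ∈ S1, ∑ j ∈ S2, ∑ k ∈ S3, (j - i) * (k - j) * (k - i) := by
    simp only [det_of_sum_pow_eq_sum_det_vandermonde, sum_piFinset_fin_three,
      det_vandermonde_fin_three]
  have hpos : ∀ i ∈ S1, ∀ j ∈ S2, ∀ k ∈ S3, 0 < (j - i) * (k - j) * (k - i) :=
    fun i hi j hj k hk =>
      have hij := h12 i hi j hj
      have hjk := h23 j hj k hk
      mul_pos (mul_pos (sub_pos.2 hij) (sub_pos.2 hjk)) (sub_pos.2 (hij.trans hjk))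
  refine ⟨hdet, ?_, fun h1 h2 h3 => ?_⟩ <;> rw [hdet]
  · exact sum_nonneg fun i hi => sum_nonneg fun j hj => sum_nonneg fun k hk =>
      (hpos i hi j hj k hk).le
  · exact sum_pos (fun i hi => sum_pos (fun j hj => sum_pos (hpos i hi j hj) h3) h2) h1

theorem stmt_10 (S1 S2 S3 : Finset ℤ)
    (h12 : ∀ i ∈ S1, ∀ j ∈ S2, i < j)
    (h23 : ∀ j ∈ S2, ∀ k ∈ S3, j < k)
    (h13 : ∀ i ∈ S1, ∀ k ∈ S3, i < k) :
    (Matrix.det (Matrix.of fun (m c : Fin 3) => ∑ j ∈ ![S1, S2, S3] c, j ^ (m : ℕ))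
        = ∑ i ∈ S1, ∑ j ∈ S2, ∑ k ∈ S3, (j - i) * (k - j) * (k - i)) ∧
      0 ≤ Matrix.det (Matrix.of fun (m c : Fin 3) => ∑ j ∈ ![S1, S2, S3] c, j ^ (m : ℕ)) ∧
      (S1.Nonempty → S2.Nonempty → S3.Nonempty →
        0 < Matrix.det (Matrix.of fun (m c : Fin 3) => ∑ j ∈ ![S1, S2, S3] c, j ^ (m : ℕ))) :=
  stmt_10_general S1 S2 S3 h12 h23
end

section
/- A code C ⊆ Σ_q^n is a t-indel s-substitution correcting code if and only if it is a t-deletion s-substitution correcting code. -/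
/-- `ReachDS t s x z`: `z` is obtainable from `x` by at most `t` deletions and at most
`s` substitutions (in any order). -/
inductive ReachDS {α : Type*} : ℕ → ℕ → List α → List α → Prop
  | refl (t s : ℕ) (x : List α) : ReachDS t s x x
  | del {t s : ℕ} {x z : List α} (i : ℕ) (hi : i < x.length)
      (h : ReachDS t s (x.eraseIdx i) z) : ReachDS (t + 1) s x z
  | sub {t s : ℕ} {x z : List α} (i : ℕ) (a : α) (hi : i < x.length)
      (h : ReachDS t s (x.set i a) z) : ReachDS t (s + 1) x z

/-- `ReachIndelS t s x z`: `z` is obtainable from `x` by any combination of at most `t`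
insertions/deletions and at most `s` substitutions (in any order). -/
inductive ReachIndelS {α : Type*} : ℕ → ℕ → List α → List α → Prop
  | refl (t s : ℕ) (x : List α) : ReachIndelS t s x x
  | del {t s : ℕ} {x z : List α} (i : ℕ) (hi : i < x.length)
      (h : ReachIndelS t s (x.eraseIdx i) z) : ReachIndelS (t + 1) s x z
  | ins {t s : ℕ} {x z : List α} (i : ℕ) (a : α) (hi : i ≤ x.length)
      (h : ReachIndelS t s (x.insertIdx i a) z) : ReachIndelS (t + 1) s x z
  | sub {t s : ℕ} {x z : List α} (i : ℕ) (a : α) (hi : i < x.length)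
      (h : ReachIndelS t s (x.set i a) z) : ReachIndelS t (s + 1) x z

/-- `C` is a `t`-deletion `s`-substitution correcting code. -/
def correctsDS {α : Type*} (t s : ℕ) (C : Set (List α)) : Prop :=
  ∀ c1 ∈ C, ∀ c2 ∈ C, c1 ≠ c2 → ¬∃ z, ReachDS t s c1 z ∧ ReachDS t s c2 z

/-- `C` is a `t`-indel `s`-substitution correcting code. -/
def correctsIndelS {α : Type*} (t s : ℕ) (C : Set (List α)) : Prop :=
  ∀ c1 ∈ C, ∀ c2 ∈ C, c1 ≠ c2 → ¬∃ z, ReachIndelS t s c1 z ∧ ReachIndelS t s c2 z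


/-!
A route of at most `t` indels and `s` substitutions from `x` to `z` can be normalised: delete
from `x` down to a subsequence `u`, substitute inside `u` to obtain `v`, then insert to reach
`z`, where `v` is a subsequence of `z` and `(|x| - |u|) + (|z| - |v|) ≤ t`.
Given such routes from `x₁` and `x₂` into a common `z`, the subsequences `v₁, v₂` of `z` share a
subsequence `w` with `|v₁| - |w| ≤ |z| - |v₂|`. So `x₁` reaches `w` by deleting to `u₁`,
substituting, and deleting down to `w`, using `(|x₁| - |u₁|) + (|z| - |v₂|)` deletions; when
`|x₁| = |x₂|` this is the mean of the two indel counts, hence at most `t`. Symmetrically for `x₂`.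
-/

open List

namespace ReachDS

variable {α : Type*}

theorem mono {t s t' s' : ℕ} {x z : List α} (h : ReachDS t s x z) (ht : t ≤ t') (hs : s ≤ s') :
    ReachDS t' s' x z := by
  induction h generalizing t' s' with
  | refl => exact .refl _ _ _
  | del i hi _ ih =>
    obtain ⟨t', rfl⟩ : ∃ k, t' = k + 1 := ⟨t' - 1, by omega⟩
    exact .del i hi (ih (by omega) hs)
  | sub i a hi _ ih =>
    obtain ⟨s', rfl⟩ : ∃ k, s' = k + 1 := ⟨s' - 1, by omega⟩
    exact .sub i a hi (ih ht (by omega))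

theorem trans {t₁ s₁ t₂ s₂ : ℕ} {x y z : List α} (h₁ : ReachDS t₁ s₁ x y)
    (h₂ : ReachDS t₂ s₂ y z) : ReachDS (t₁ + t₂) (s₁ + s₂) x z := by
  induction h₁ with
  | refl => exact h₂.mono (by omega) (by omega)
  | del i hi _ ih => exact (ReachDS.del i hi (ih h₂)).mono (by omega) le_rfl
  | sub i a hi _ ih => exact (ReachDS.sub i a hi (ih h₂)).mono le_rfl (by omega)

theorem cons {t s : ℕ} {x z : List α} (a : α) (h : ReachDS t s x z) :
    ReachDS t s (a :: x) (a :: z) := by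
  induction h with
  | refl => exact .refl _ _ _
  | del i hi _ ih => exact .del (i + 1) (by simpa using hi) (by simpa using ih)
  | sub i b hi _ ih => exact .sub (i + 1) b (by simpa using hi) (by simpa using ih)

theorem toReachIndelS {t s : ℕ} {x z : List α} (h : ReachDS t s x z) : ReachIndelS t s x z := by
  induction h with
  | refl => exact .refl _ _ _
  | del i hi _ ih => exact .del i hi ih
  | sub i a hi _ ih => exact .sub i a hi ih

theorem length_eq {s : ℕ} {x z : List α} (h : ReachDS 0 s x z) : x.length = z.length := by
  generalize ht : 0 = t at h
  induction h with
  | refl => rfl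
  | del => omega
  | sub i a hi _ ih => simpa using ih ht

theorem of_sublist {t s : ℕ} {x u : List α} (h : u <+ x) (ht : x.length ≤ u.length + t) :
    ReachDS t s x u := by
  induction h generalizing t with
  | slnil => exact .refl _ _ _
  | cons a h ih =>
    have := h.length_le
    obtain ⟨k, rfl⟩ : ∃ k, t = k + 1 := ⟨t - 1, by simp at ht; omega⟩
    exact .del 0 (by simp) (ih (by simp at ht; omega))
  | cons_cons a _ ih => exact (ih (by simp at ht; omega)).cons a

theorem set (x : List α) (i : ℕ) (a : α) : ReachDS 0 1 x (x.set i a) := by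
  by_cases hi : i < x.length
  · exact .sub i a hi (.refl _ _ _)
  · rw [List.set_eq_of_length_le (by omega)]
    exact .refl _ _ _

theorem eraseIdx_set (x : List α) (i j : ℕ) (a : α) :
    ReachDS 0 1 (x.eraseIdx j) ((x.set i a).eraseIdx j) := by
  rw [List.eraseIdx_set]
  split_ifs with _ hji
  · exact set _ _ _
  · rw [hji]; exact .refl _ _ _
  · exact set _ _ _

theorem eraseIdx {s : ℕ} {x z : List α} (h : ReachDS 0 s x z) (j : ℕ) :
    ReachDS 0 s (x.eraseIdx j) (z.eraseIdx j) := by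
  generalize ht : 0 = t at h
  induction h with
  | refl => exact .refl _ _ _
  | del => omega
  | sub i a _ _ ih => exact ((eraseIdx_set _ i j a).trans (ih ht)).mono (by omega) (by omega)

theorem of_sublist_reachDS_sublist {t s : ℕ} {x u v w : List α}
    (hu : u <+ x) (huv : ReachDS 0 s u v) (hw : w <+ v)
    (ht : x.length - u.length + (v.length - w.length) ≤ t) : ReachDS t s x w := by
  have := hu.length_le
  have := hw.length_le
  have hxu : ReachDS (x.length - u.length) 0 x u := .of_sublist hu (by omega)
  have hvw : ReachDS (v.length - w.length) 0 v w := .of_sublist hw (by omega)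
  exact ((hxu.trans huv).trans hvw).mono (by omega) (by omega)

end ReachDS

section Sublist

variable {α : Type*}

theorem sublist_or_eraseIdx_sublist_of_sublist_insertIdx {x u : List α} {i : ℕ} {a : α}
    (hi : i ≤ x.length) (h : u <+ x.insertIdx i a) :
    u <+ x ∨ ∃ k < u.length, u.eraseIdx k <+ x := by
  induction i generalizing x u with
  | zero =>
    rw [insertIdx_zero] at h
    cases h with
    | cons _ h => exact .inl h
    | cons_cons _ h => exact .inr ⟨0, by simp, h⟩
  | succ i ih =>
    obtain _ | ⟨b, x⟩ := x
    · simp at hi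
    rw [insertIdx_succ_cons] at h
    cases h with
    | cons _ h =>
      rcases ih (by simpa using hi) h with h | ⟨k, hk, h⟩
      · exact .inl (h.cons b)
      · exact .inr ⟨k, hk, h.cons b⟩
    | cons_cons _ h =>
      rcases ih (by simpa using hi) h with h | ⟨k, hk, h⟩
      · exact .inl (h.cons_cons b)
      · exact .inr ⟨k + 1, by simpa using hk, by simpa using h.cons_cons b⟩

theorem exists_sublist_reachDS_of_sublist_set {x u : List α} {i : ℕ} {a : α}
    (h : u <+ x.set i a) : ∃ u', u' <+ x ∧ ReachDS 0 1 u' u := by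
  induction x generalizing i u with
  | nil => exact ⟨u, by simpa using h, .refl _ _ _⟩
  | cons b x ih =>
    cases i with
    | zero =>
      rw [set_cons_zero] at h
      cases h with
      | cons _ h => exact ⟨u, h.cons b, .refl _ _ _⟩
      | @cons_cons u _ _ h => exact ⟨b :: u, h.cons_cons b, ReachDS.set (b :: u) 0 a⟩
    | succ i =>
      rw [set_cons_succ] at h
      cases h with
      | cons _ h =>
        obtain ⟨u', hu', hr⟩ := ih h
        exact ⟨u', hu'.cons b, hr⟩
      | cons_cons _ h =>
        obtain ⟨u', hu', hr⟩ := ih h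
        exact ⟨b :: u', hu'.cons_cons b, hr.cons b⟩

theorem exists_common_sublist {z v₁ v₂ : List α} (h₁ : v₁ <+ z) (h₂ : v₂ <+ z) :
    ∃ w, w <+ v₁ ∧ w <+ v₂ ∧ v₁.length + v₂.length ≤ z.length + w.length := by
  induction z generalizing v₁ v₂ with
  | nil => exact ⟨[], nil_sublist _, nil_sublist _, by simp [eq_nil_of_sublist_nil h₁,
      eq_nil_of_sublist_nil h₂]⟩
  | cons a z ih =>
    cases h₁ with
    | cons _ h₁ =>
      cases h₂ with
      | cons _ h₂ =>
        obtain ⟨w, hw₁, hw₂, hlen⟩ := ih h₁ h₂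
        exact ⟨w, hw₁, hw₂, by simp; omega⟩
      | cons_cons _ h₂ =>
        obtain ⟨w, hw₁, hw₂, hlen⟩ := ih h₁ h₂
        exact ⟨w, hw₁, hw₂.cons a, by simp; omega⟩
    | cons_cons _ h₁ =>
      cases h₂ with
      | cons _ h₂ =>
        obtain ⟨w, hw₁, hw₂, hlen⟩ := ih h₁ h₂
        exact ⟨w, hw₁.cons a, hw₂, by simp; omega⟩
      | cons_cons _ h₂ =>
        obtain ⟨w, hw₁, hw₂, hlen⟩ := ih h₁ h₂
        exact ⟨a :: w, hw₁.cons_cons a, hw₂.cons_cons a, by simp; omega⟩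

end Sublist

theorem ReachIndelS.exists_sublist_reachDS_sublist {α : Type*} {t s : ℕ} {x z : List α}
    (h : ReachIndelS t s x z) :
    ∃ u v, u <+ x ∧ v <+ z ∧ ReachDS 0 s u v ∧
      x.length - u.length + (z.length - v.length) ≤ t := by
  induction h with
  | refl t s x => exact ⟨x, x, .refl x, .refl x, .refl _ _ _, by simp⟩
  | del j hj _ ih =>
    obtain ⟨u, v, hu, hv, huv, hlen⟩ := ih
    refine ⟨u, v, hu.trans (eraseIdx_sublist _ j), hv, huv, ?_⟩
    rw [length_eraseIdx_of_lt hj] at hlen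
    omega
  | ins j a hj _ ih =>
    obtain ⟨u, v, hu, hv, huv, hlen⟩ := ih
    rw [length_insertIdx_of_le_length hj] at hlen
    rcases sublist_or_eraseIdx_sublist_of_sublist_insertIdx hj hu with hu | ⟨k, hk, hu⟩
    · exact ⟨u, v, hu, hv, huv, by omega⟩
    · have hk' : k < v.length := huv.length_eq ▸ hk
      refine ⟨u.eraseIdx k, v.eraseIdx k, hu, (eraseIdx_sublist _ k).trans hv, huv.eraseIdx k, ?_⟩
      rw [length_eraseIdx_of_lt hk, length_eraseIdx_of_lt hk']
      omega
  | sub j a hj _ ih =>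
    obtain ⟨u, v, hu, hv, huv, hlen⟩ := ih
    obtain ⟨u', hu', hu'u⟩ := exists_sublist_reachDS_of_sublist_set hu
    refine ⟨u', v, hu', hv, (hu'u.trans huv).mono le_rfl (by omega), ?_⟩
    rw [length_set, ← hu'u.length_eq] at hlen
    exact hlen

theorem exists_reachDS_of_reachIndelS {α : Type*} {t s : ℕ} {x₁ x₂ z : List α}
    (hx : x₁.length = x₂.length) (h₁ : ReachIndelS t s x₁ z) (h₂ : ReachIndelS t s x₂ z) :
    ∃ w, ReachDS t s x₁ w ∧ ReachDS t s x₂ w := by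
  obtain ⟨u₁, v₁, hu₁, hv₁, huv₁, hlen₁⟩ := h₁.exists_sublist_reachDS_sublist
  obtain ⟨u₂, v₂, hu₂, hv₂, huv₂, hlen₂⟩ := h₂.exists_sublist_reachDS_sublist
  obtain ⟨w, hw₁, hw₂, hw⟩ := exists_common_sublist hv₁ hv₂
  have := huv₁.length_eq; have := huv₂.length_eq
  have := hu₁.length_le; have := hu₂.length_le; have := hv₁.length_le; have := hv₂.length_le
  have := hw₁.length_le; have := hw₂.length_le
  exact ⟨w, .of_sublist_reachDS_sublist hu₁ huv₁ hw₁ (by omega),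
    .of_sublist_reachDS_sublist hu₂ huv₂ hw₂ (by omega)⟩

theorem correctsIndelS.correctsDS {α : Type*} {t s : ℕ} {C : Set (List α)}
    (h : correctsIndelS t s C) : correctsDS t s C :=
  fun c₁ h₁ c₂ h₂ hne ⟨z, hz₁, hz₂⟩ ↦ h c₁ h₁ c₂ h₂ hne ⟨z, hz₁.toReachIndelS, hz₂.toReachIndelS⟩

theorem correctsDS.correctsIndelS {α : Type*} {t s n : ℕ} {C : Set (List α)}
    (hC : ∀ c ∈ C, c.length = n) (h : correctsDS t s C) : correctsIndelS t s C :=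
  fun c₁ h₁ c₂ h₂ hne ⟨_, hz₁, hz₂⟩ ↦ h c₁ h₁ c₂ h₂ hne
    (exists_reachDS_of_reachIndelS ((hC c₁ h₁).trans (hC c₂ h₂).symm) hz₁ hz₂)

theorem stmt_13 (q n t s : ℕ) (C : Set (List (Fin q))) (hC : ∀ c ∈ C, c.length = n) :
    correctsIndelS t s C ↔ correctsDS t s C :=
  ⟨correctsIndelS.correctsDS, correctsDS.correctsIndelS hC⟩
end

section
/- For integers n, s with n ≥ 2s+2 and s ≥ 1: ∑_{r=2s+2}^{n-1} 2·C(n-2, r-1)·(1/(r-2s)) / C(n-s-1, s) ≤ ((2s+1)/(n-1)) · (2·s!/(n-2s)^s) · 2^{n-1}. -/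
/-!
Bound the summands one by one. For `r ≥ 2s + 1`, `1/(r - 2s) ≤ (2s+1)/r`, and the absorption
identity `C(n-2, r-1)/r = C(n-1, r)/(n-1)` makes the summand a constant multiple of `C(n-1, r)`.
The denominator satisfies `s! · C(n-s-1, s) ≥ (n-2s)^s`, because the falling factorial
`(n-s-1)(n-s-2)⋯(n-2s)` has `s` factors, each at least `n - 2s`. Finally, part of a row of
Pascal's triangle sums to at most `2^(n-1)`.
-/

open Finset

theorem one_div_sub_le_add_one_div {a r : ℝ} (ha : 0 ≤ a) (hr : a + 1 ≤ r) :
    1 / (r - a) ≤ (a + 1) / r := by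
  rw [div_le_div_iff₀ (by linarith) (by linarith)]
  nlinarith

theorem Nat.cast_choose_pred_div_s17 {m r : ℕ} (hm : 0 < m) (hr : 0 < r) :
    ((m - 1).choose (r - 1) : ℝ) / r = (m.choose r : ℝ) / m := by
  obtain ⟨m, rfl⟩ := Nat.exists_eq_add_of_lt hm
  obtain ⟨r, rfl⟩ := Nat.exists_eq_add_of_lt hr
  have h := Nat.add_one_mul_choose_eq m r
  simp only [zero_add, Nat.add_sub_cancel] at h ⊢
  rw [div_eq_div_iff (by positivity) (by positivity)]
  exact_mod_cast (h.symm.trans (mul_comm _ _)).symm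

theorem one_div_choose_le_factorial_div_pow {m k : ℕ} (hk : k ≤ m) :
    1 / (m.choose k : ℝ) ≤ k.factorial / ((m + 1 - k : ℕ) : ℝ) ^ k := by
  have hpos : 0 < m + 1 - k := by omega
  rw [div_le_div_iff₀ (by exact_mod_cast Nat.choose_pos hk) (by positivity), one_mul]
  exact_mod_cast (Nat.pow_sub_le_descFactorial m k).trans_eq
    (Nat.descFactorial_eq_factorial_mul_choose m k)

theorem Nat.sum_choose_le_two_pow (m : ℕ) (t : Finset ℕ) : ∑ r ∈ t, m.choose r ≤ 2 ^ m := by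
  calc ∑ r ∈ t, m.choose r ≤ ∑ r ∈ t ∪ range (m + 1), m.choose r :=
        sum_le_sum_of_subset subset_union_left
    _ = ∑ r ∈ range (m + 1), m.choose r := by
        refine (sum_subset subset_union_right fun r _ hr => ?_).symm
        exact Nat.choose_eq_zero_of_lt (by simpa using hr)
    _ = 2 ^ m := Nat.sum_range_choose m

theorem summand_le_mul_choose {n s r : ℕ} (hr : 2 * s + 1 ≤ r) (hrn : r < n) :
    2 * ((n - 2).choose (r - 1) : ℝ) * (1 / ((r : ℝ) - 2 * s)) / ((n - s - 1).choose s : ℝ) ≤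
      (2 * (s : ℝ) + 1) / ((n : ℝ) - 1) * (2 * (s.factorial : ℝ) / ((n : ℝ) - 2 * s) ^ s) *
        ((n - 1).choose r : ℝ) := by
  have hr' : (2 * s + 1 : ℝ) ≤ r := by exact_mod_cast hr
  have hchoose : 1 / ((n - s - 1).choose s : ℝ) ≤ s.factorial / ((n : ℝ) - 2 * s) ^ s := by
    have h := one_div_choose_le_factorial_div_pow (m := n - s - 1) (k := s) (by omega)
    rwa [show n - s - 1 + 1 - s = n - 2 * s by omega, Nat.cast_sub (by omega),
      Nat.cast_mul, Nat.cast_two] at h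
  have habsorb := Nat.cast_choose_pred_div_s17 (m := n - 1) (r := r) (by omega) (by omega)
  rw [show n - 1 - 1 = n - 2 by omega, Nat.cast_pred (by omega)] at habsorb
  calc _ = 2 * ((n - 2).choose (r - 1) : ℝ) * (1 / ((r : ℝ) - 2 * s)) *
        (1 / ((n - s - 1).choose s : ℝ)) := by ring
    _ ≤ 2 * ((n - 2).choose (r - 1) : ℝ) * ((2 * s + 1) / r) *
        (s.factorial / ((n : ℝ) - 2 * s) ^ s) := by
      gcongr 2 * _ * ?_ * ?_
      exact one_div_sub_le_add_one_div (by positivity) hr'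
    _ = (2 * s + 1) * (((n - 2).choose (r - 1) : ℝ) / r) *
        (2 * s.factorial / ((n : ℝ) - 2 * s) ^ s) := by ring
    _ = _ := by
      rw [habsorb]
      ring

theorem stmt_17_general (n s : ℕ) (hns : 2 * s + 2 ≤ n) :
    ∑ r ∈ Finset.Icc (2 * s + 2) (n - 1),
        2 * ((n - 2).choose (r - 1) : ℝ) * (1 / ((r : ℝ) - 2 * s)) / ((n - s - 1).choose s : ℝ) ≤
      ((2 * (s : ℝ) + 1) / ((n : ℝ) - 1)) * (2 * (s.factorial : ℝ) / ((n : ℝ) - 2 * s) ^ s) *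
        2 ^ (n - 1) := by
  have hn : (2 * s + 2 : ℝ) ≤ n := by exact_mod_cast hns
  set K := (2 * (s : ℝ) + 1) / ((n : ℝ) - 1) * (2 * (s.factorial : ℝ) / ((n : ℝ) - 2 * s) ^ s)
  have hK : 0 ≤ K := by
    have : (0 : ℝ) < n - 1 := by linarith
    have : (0 : ℝ) < n - 2 * s := by linarith
    positivity
  calc _ ≤ ∑ r ∈ Icc (2 * s + 2) (n - 1), K * ((n - 1).choose r : ℝ) :=
        sum_le_sum fun r hr => summand_le_mul_choose (by grind) (by grind)
    _ = K * ∑ r ∈ Icc (2 * s + 2) (n - 1), ((n - 1).choose r : ℝ) := (mul_sum _ _ _).symm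
    _ ≤ K * 2 ^ (n - 1) := by
        gcongr
        exact_mod_cast Nat.sum_choose_le_two_pow (n - 1) _

theorem stmt_17 (n s : ℕ) (hs : 1 ≤ s) (hns : 2 * s + 2 ≤ n) :
    ∑ r ∈ Finset.Icc (2 * s + 2) (n - 1),
        2 * ((n - 2).choose (r - 1) : ℝ) * (1 / ((r : ℝ) - 2 * s)) / ((n - s - 1).choose s : ℝ) ≤
      ((2 * (s : ℝ) + 1) / ((n : ℝ) - 1)) * (2 * (s.factorial : ℝ) / ((n : ℝ) - 2 * s) ^ s) *
        2 ^ (n - 1) :=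
  stmt_17_general n s hns
end
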